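/- Let R be a finite 4-centralizer ring (so that the additive quotient group R/Z(R) is isomorphic to ℤ_2 × ℤ_2). Then the characteristic polynomial of the adjacency matrix of the commuting graph Γ_R equals (X + 1)^{3|Z(R)| − 3} · (X − (|Z(R)| − 1))^3; in particular Γ_R is integral. -/

import Mathlib

open Polynomial

/-- The center of a (possibly non-unital) ring, as a set. -/
def ringCenter (R : Type*) [NonUnitalRing R] : Set R :=
  {z : R | ∀ r : R, r * z = z * r}

/-- The centralizer of an element of a (possibly non-unital) ring, as a set. -/
def ringCentralizer {R : Type*} [NonUnitalRing R] (r : R) : Set R :=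
  {s : R | r * s = s * r}

/-- The commuting graph of a ring: vertices are the non-central elements, and two
distinct vertices are adjacent iff they commute. -/
def commGraph (R : Type*) [NonUnitalRing R] :
    SimpleGraph {x : R // x ∉ ringCenter R} where
  Adj x y := x ≠ y ∧ (x : R) * (y : R) = (y : R) * (x : R)
  symm := ⟨fun _ _ h => ⟨h.1.symm, h.2.symm⟩⟩
  loopless := ⟨fun _ h => h.1 rfl⟩

/-- The characteristic polynomial (over `K`) of the adjacency matrix of the
commuting graph of a finite ring. -/
noncomputable def commCharpoly (R : Type*) [NonUnitalRing R] [Fintype R]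
    (K : Type*) [CommRing K] : Polynomial K := by
  classical
  exact ((commGraph R).adjMatrix K).charpoly

/-- The center of a (possibly non-unital) ring, as an additive subgroup. -/
def centerAddSubgroup (R : Type*) [NonUnitalRing R] : AddSubgroup R where
  carrier := ringCenter R
  add_mem' := by
    intro a b ha hb r
    rw [mul_add, add_mul, ha r, hb r]
  zero_mem' := by
    intro r
    simp
  neg_mem' := by
    intro a ha r
    rw [mul_neg, neg_mul, ha r]


section AuxLemmas
set_option synthInstance.maxHeartbeats 1000000
set_option maxHeartbeats 1000000
open Matrix


section Field
variable {F : Type*} [Field F] {ι : Type*} [Fintype ι] [DecidableEq ι]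

lemma det_smul_one_sub_allOnes [Nonempty ι] (a : F) (ha : a ≠ 0) :
    Matrix.det (a • (1 : Matrix ι ι F) - Matrix.of (fun _ _ => (1 : F))) =
      a ^ (Fintype.card ι - 1) * (a - Fintype.card ι) := by
  have key : ∀ i j : ι, ((1 : Matrix ι ι F) +
      Matrix.replicateCol Unit (fun _ : ι => -a⁻¹) * Matrix.replicateRow Unit (fun _ : ι => (1:F))) i j
      = (if i = j then 1 else 0) + -a⁻¹ := by
    intro i j
    simp [Matrix.mul_apply, Matrix.one_apply]
  have h1 : a • (1 : Matrix ι ι F) - Matrix.of (fun _ _ => (1 : F)) =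
      a • ((1 : Matrix ι ι F) +
        Matrix.replicateCol Unit (fun _ : ι => -a⁻¹) * Matrix.replicateRow Unit (fun _ : ι => (1:F))) := by
    ext i j
    rw [Matrix.smul_apply, key i j]
    by_cases h : i = j <;> simp [h, Matrix.one_apply, sub_eq_add_neg] <;> field_simp
  rw [h1, Matrix.det_smul, Matrix.det_one_add_replicateCol_mul_replicateRow]
  have hdot : (fun _ : ι => (1:F)) ⬝ᵥ (fun _ : ι => -a⁻¹) = -(Fintype.card ι * a⁻¹) := by
    simp [dotProduct, Finset.card_univ, mul_comm]
  rw [hdot]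
  obtain ⟨m, hm⟩ : ∃ m, Fintype.card ι = m + 1 :=
    ⟨Fintype.card ι - 1, (Nat.succ_pred_eq_of_pos Fintype.card_pos).symm⟩
  rw [hm]
  simp only [Nat.add_sub_cancel]
  field_simp
  ring
end Field

section Clique
variable {ι : Type*} [Fintype ι] [DecidableEq ι]

lemma charmatrix_blockDiagonal' {R : Type*} [CommRing R] {o : Type*} [Fintype o] [DecidableEq o]
    (M : o → Matrix ι ι R) :
    Matrix.charmatrix (Matrix.blockDiagonal M) =
      Matrix.blockDiagonal (fun i => Matrix.charmatrix (M i)) := by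
  ext ⟨a, i⟩ ⟨b, j⟩
  by_cases h : i = j
  · subst h
    by_cases hab : a = b
    · subst hab
      simp [Matrix.charmatrix_apply, Matrix.blockDiagonal_apply, Matrix.diagonal_apply]
    · simp [Matrix.charmatrix_apply, Matrix.blockDiagonal_apply, Matrix.diagonal_apply,
        hab, Prod.ext_iff]
  · simp [Matrix.charmatrix_apply, Matrix.blockDiagonal_apply, Matrix.diagonal_apply,
      h, Prod.ext_iff]

lemma charpoly_blockDiagonal' {R : Type*} [CommRing R] {o : Type*} [Fintype o] [DecidableEq o]
    (M : o → Matrix ι ι R) :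
    (Matrix.blockDiagonal M).charpoly = ∏ i, (M i).charpoly := by
  rw [Matrix.charpoly, charmatrix_blockDiagonal', Matrix.det_blockDiagonal]
  rfl

lemma charpoly_clique [Nonempty ι] :
    (Matrix.of fun i j : ι => if i = j then (0:ℤ) else 1).charpoly =
      (X + 1) ^ (Fintype.card ι - 1) * (X - C ((Fintype.card ι : ℤ) - 1)) := by
  set n := Fintype.card ι
  have hchar : Matrix.charmatrix (Matrix.of fun i j : ι => if i = j then (0:ℤ) else 1) =
      (X + 1 : ℤ[X]) • (1 : Matrix ι ι ℤ[X]) - Matrix.of (fun _ _ => (1 : ℤ[X])) := by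
    ext i j
    by_cases h : i = j
    · subst h; simp [Matrix.charmatrix_apply_eq, Matrix.one_apply]
    · simp [Matrix.charmatrix_apply_ne _ _ _ h, Matrix.one_apply, h]
  rw [Matrix.charpoly, hchar]
  -- transfer to RatFunc ℚ
  set φ : ℤ[X] →+* RatFunc ℚ :=
    (algebraMap ℚ[X] (RatFunc ℚ)).comp (Polynomial.mapRingHom (Int.castRingHom ℚ)) with hφ
  have hinj : Function.Injective φ :=
    (IsFractionRing.injective ℚ[X] (RatFunc ℚ)).comp
      (Polynomial.map_injective _ Int.cast_injective)
  apply hinj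
  rw [RingHom.map_det]
  have hmap : φ.mapMatrix ((X + 1 : ℤ[X]) • (1 : Matrix ι ι ℤ[X]) - Matrix.of (fun _ _ => (1 : ℤ[X])))
      = (φ (X + 1)) • (1 : Matrix ι ι (RatFunc ℚ)) - Matrix.of (fun _ _ => (1 : RatFunc ℚ)) := by
    ext i j
    by_cases h : i = j <;> simp [h, Matrix.one_apply]
  have hne : (X + 1 : ℤ[X]) ≠ 0 := by
    simpa using Polynomial.X_add_C_ne_zero (1 : ℤ)
  have hXne : φ (X + 1) ≠ 0 := by
    intro h
    exact hne (hinj (by simpa using h))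
  rw [hmap, det_smul_one_sub_allOnes _ hXne]
  have hC : (C ((n : ℤ) - 1) : ℤ[X]) = (n : ℤ[X]) - 1 := by
    rw [map_sub, _root_.map_one (Polynomial.C : ℤ →+* ℤ[X]), Polynomial.C_eq_natCast]
  rw [hC]
  simp only [map_sub, _root_.map_mul, map_pow, map_add, _root_.map_one, map_natCast]
  ring
end Clique




section RingFacts
variable {R : Type*} [NonUnitalRing R]

lemma rc_zero_mem (r : R) : (0 : R) ∈ ringCentralizer r := by
  simp [ringCentralizer]

lemma rc_sub_mem {r x y : R} (hx : x ∈ ringCentralizer r) (hy : y ∈ ringCentralizer r) :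
    x - y ∈ ringCentralizer r := by
  simp only [ringCentralizer, Set.mem_setOf_eq] at *
  rw [mul_sub, sub_mul, hx, hy]

lemma center_subset_rc (r : R) : ringCenter R ⊆ ringCentralizer r := fun z hz => (hz r)

lemma self_mem_rc (r : R) : r ∈ ringCentralizer r := rfl

lemma rc_eq_univ_of_center {r : R} (hr : r ∈ ringCenter R) : ringCentralizer r = Set.univ := by
  ext s; simp only [Set.mem_univ, iff_true, ringCentralizer, Set.mem_setOf_eq]
  exact (hr s).symm

lemma center_of_rc_eq_univ {r : R} (hr : ringCentralizer r = Set.univ) : r ∈ ringCenter R := by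
  intro s
  have : s ∈ ringCentralizer r := hr ▸ Set.mem_univ s
  exact this.symm

lemma rc_zero : ringCentralizer (0 : R) = Set.univ := by
  ext s; simp [ringCentralizer]

lemma zero_mem_center : (0 : R) ∈ ringCenter R := by intro r; simp

lemma center_sub_mem {x y : R} (hx : x ∈ ringCenter R) (hy : y ∈ ringCenter R) :
    x - y ∈ ringCenter R := by
  intro r; rw [mul_sub, sub_mul, hx r, hy r]

/-- Scorza step: if a group is covered by three subgroup-like sets, two of which are proper,
then the intersection of those two is contained in the third. -/
lemma scorza {S T U : Set R}
    (hS : ∀ x ∈ S, ∀ y ∈ S, x - y ∈ S) (hT : ∀ x ∈ T, ∀ y ∈ T, x - y ∈ T)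
    (hU : ∀ x ∈ U, ∀ y ∈ U, x - y ∈ U)
    (hcover : ∀ x : R, x ∈ S ∨ x ∈ T ∨ x ∈ U)
    (hSne : S ≠ Set.univ) (hTne : T ≠ Set.univ) : S ∩ T ⊆ U := by
  have hUST : ¬ (U ⊆ S ∪ T) := by
    intro hsub
    have cover2 : ∀ x : R, x ∈ S ∨ x ∈ T := by
      intro x
      rcases hcover x with h | h | h
      · exact Or.inl h
      · exact Or.inr h
      · rcases hsub h with h' | h'
        · exact Or.inl h'
        · exact Or.inr h'
    by_cases hST : S ⊆ T
    · exact hTne (Set.eq_univ_of_forall fun x => (cover2 x).elim (fun h => hST h) id)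
    by_cases hTS : T ⊆ S
    · exact hSne (Set.eq_univ_of_forall fun x => (cover2 x).elim id (fun h => hTS h))
    obtain ⟨a, haS, haT⟩ := Set.not_subset.mp hST
    obtain ⟨b, hbT, hbS⟩ := Set.not_subset.mp hTS
    rcases cover2 (a + b) with h | h
    · have : b ∈ S := by
        have := hS _ h _ haS
        rwa [add_sub_cancel_left] at this
      exact hbS this
    · have : a ∈ T := by
        have := hT _ h _ hbT
        rwa [add_sub_cancel_right] at this
      exact haT this
  obtain ⟨c0, hc0U, hc0⟩ := Set.not_subset.mp hUST
  rw [Set.mem_union] at hc0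
  push_neg at hc0
  rintro g ⟨hgS, hgT⟩
  by_contra hgU
  rcases hcover (g + c0) with h | h | h
  · exact hc0.1 (by have := hS _ h _ hgS; rwa [add_sub_cancel_left] at this)
  · exact hc0.2 (by have := hT _ h _ hgT; rwa [add_sub_cancel_left] at this)
  · exact hgU (by have := hU _ h _ hc0U; rwa [add_sub_cancel_right] at this)

/-- Difference of two elements of the same proper part is central. -/
lemma diff_central {A B C : Set R}
    (hA : ∀ x ∈ A, ∀ y ∈ A, x - y ∈ A) (hB : ∀ x ∈ B, ∀ y ∈ B, x - y ∈ B)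
    (hC : ∀ x ∈ C, ∀ y ∈ C, x - y ∈ C)
    (hcover : ∀ x : R, x ∈ A ∨ x ∈ B ∨ x ∈ C)
    (hABZ : A ∩ B = ringCenter R) (hACZ : A ∩ C = ringCenter R)
    {b0 : R} (hb0B : b0 ∈ B) (hb0Z : b0 ∉ ringCenter R) :
    ∀ x ∈ A, x ∉ ringCenter R → ∀ y ∈ A, y ∉ ringCenter R → x - y ∈ ringCenter R := by
  have claim : ∀ x ∈ A, x ∉ ringCenter R → x + b0 ∈ C := by
    intro x hxA hxZ
    rcases hcover (x + b0) with h | h | h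
    · exfalso
      have hb0A : b0 ∈ A := by
        have := hA _ h _ hxA
        rwa [add_sub_cancel_left] at this
      exact hb0Z (hABZ ▸ Set.mem_inter hb0A hb0B)
    · exfalso
      have hxB : x ∈ B := by
        have := hB _ h _ hb0B
        rwa [add_sub_cancel_right] at this
      exact hxZ (hABZ ▸ Set.mem_inter hxA hxB)
    · exact h
  intro x hxA hxZ y hyA hyZ
  have h1 : x + b0 ∈ C := claim x hxA hxZ
  have h2 : y + b0 ∈ C := claim y hyA hyZ
  have h3 : x - y ∈ C := by
    have := hC _ h1 _ h2
    rwa [add_sub_add_right_eq_sub] at this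
  exact hACZ ▸ Set.mem_inter (hA _ hxA _ hyA) h3

end RingFacts

section Structure
variable {R : Type*} [NonUnitalRing R] [Fintype R]

lemma structure_of_four
    (h4 : {S : Set R | ∃ r : R, S = ringCentralizer r}.ncard = 4) :
    ∃ (P : Fin 3 → Set R) (v : Fin 3 → R),
      (∀ i, v i ∈ P i) ∧ (∀ i, v i ∉ ringCenter R) ∧
      (∀ i, ringCenter R ⊆ P i) ∧
      (∀ i, ∀ x ∈ P i, ∀ y ∈ P i, x - y ∈ P i) ∧
      (∀ i j, i ≠ j → P i ∩ P j = ringCenter R) ∧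
      (∀ x : R, ∃ i, x ∈ P i) ∧
      (∀ i, ∀ x ∈ P i, x ∉ ringCenter R → ∀ y ∈ P i, y ∉ ringCenter R →
        x - y ∈ ringCenter R) ∧
      (∀ x y : R, x ∉ ringCenter R → y ∉ ringCenter R → x * y = y * x →
        ∀ i, x ∈ P i → y ∈ P i) := by
  classical
  set 𝒞 : Set (Set R) := {S : Set R | ∃ r : R, S = ringCentralizer r} with h𝒞
  have huniv_mem : Set.univ ∈ 𝒞 := ⟨0, rc_zero.symm⟩
  have hfin : 𝒞.Finite := Set.toFinite _
  have h3 : (𝒞 \ {Set.univ}).ncard = 3 := by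
    rw [Set.ncard_diff_singleton_of_mem huniv_mem, h4]
  obtain ⟨A, B, C, hAB, hAC, hBC, hABC⟩ := Set.ncard_eq_three.mp h3
  have hmem : ∀ S ∈ ({A, B, C} : Set (Set R)), S ∈ 𝒞 ∧ S ≠ Set.univ := by
    intro S hS
    rw [← hABC] at hS
    exact ⟨hS.1, hS.2⟩
  have hAmem := hmem A (by simp)
  have hBmem := hmem B (by simp)
  have hCmem := hmem C (by simp)
  obtain ⟨ra, hra⟩ := hAmem.1
  obtain ⟨rb, hrb⟩ := hBmem.1
  obtain ⟨rc, hrc⟩ := hCmem.1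
  -- generators are noncentral
  have hraZ : ra ∉ ringCenter R := fun h => hAmem.2 (hra.trans (rc_eq_univ_of_center h))
  have hrbZ : rb ∉ ringCenter R := fun h => hBmem.2 (hrb.trans (rc_eq_univ_of_center h))
  have hrcZ : rc ∉ ringCenter R := fun h => hCmem.2 (hrc.trans (rc_eq_univ_of_center h))
  have hraA : ra ∈ A := hra ▸ self_mem_rc ra
  have hrbB : rb ∈ B := hrb ▸ self_mem_rc rb
  have hrcC : rc ∈ C := hrc ▸ self_mem_rc rc
  -- classification of centralizers
  have hclass : ∀ r : R, ringCentralizer r = Set.univ ∨ ringCentralizer r = A ∨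
      ringCentralizer r = B ∨ ringCentralizer r = C := by
    intro r
    by_cases h : ringCentralizer r = Set.univ
    · exact Or.inl h
    · have hmem' : ringCentralizer r ∈ 𝒞 \ {Set.univ} := ⟨⟨r, rfl⟩, h⟩
      rw [hABC] at hmem'
      rcases hmem' with h' | h' | h'
      · exact Or.inr (Or.inl h')
      · exact Or.inr (Or.inr (Or.inl h'))
      · exact Or.inr (Or.inr (Or.inr h'))
  -- closure under subtraction
  have hAc : ∀ x ∈ A, ∀ y ∈ A, x - y ∈ A := by
    intro x hx y hy; rw [hra] at *; exact rc_sub_mem hx hy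
  have hBc : ∀ x ∈ B, ∀ y ∈ B, x - y ∈ B := by
    intro x hx y hy; rw [hrb] at *; exact rc_sub_mem hx hy
  have hCc : ∀ x ∈ C, ∀ y ∈ C, x - y ∈ C := by
    intro x hx y hy; rw [hrc] at *; exact rc_sub_mem hx hy
  -- center contained in each
  have hZA : ringCenter R ⊆ A := hra ▸ center_subset_rc ra
  have hZB : ringCenter R ⊆ B := hrb ▸ center_subset_rc rb
  have hZC : ringCenter R ⊆ C := hrc ▸ center_subset_rc rc
  -- triple intersection is the center
  have hDZ : ∀ d : R, d ∈ A → d ∈ B → d ∈ C → d ∈ ringCenter R := by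
    intro d hdA hdB hdC r
    rcases hclass r with h | h | h | h
    · have : d ∈ ringCentralizer r := h ▸ Set.mem_univ d
      exact this
    · have : d ∈ ringCentralizer r := h ▸ hdA
      exact this
    · have : d ∈ ringCentralizer r := h ▸ hdB
      exact this
    · have : d ∈ ringCentralizer r := h ▸ hdC
      exact this
  -- cover
  have hcover : ∀ x : R, x ∈ A ∨ x ∈ B ∨ x ∈ C := by
    intro x
    rcases hclass x with h | h | h | h
    · exact Or.inl (hZA (center_of_rc_eq_univ h))
    · exact Or.inl (h ▸ self_mem_rc x)
    · exact Or.inr (Or.inl (h ▸ self_mem_rc x))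
    · exact Or.inr (Or.inr (h ▸ self_mem_rc x))
  -- pairwise intersections equal the center
  have hABZ : A ∩ B = ringCenter R := by
    apply Set.Subset.antisymm
    · intro g hg
      have hgC : g ∈ C := scorza hAc hBc hCc hcover hAmem.2 hBmem.2 hg
      exact hDZ g hg.1 hg.2 hgC
    · exact Set.subset_inter hZA hZB
  have hACZ : A ∩ C = ringCenter R := by
    apply Set.Subset.antisymm
    · intro g hg
      have hgB : g ∈ B := by
        refine scorza hAc hCc hBc ?_ hAmem.2 hCmem.2 hg
        intro x; rcases hcover x with h | h | h
        · exact Or.inl h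
        · exact Or.inr (Or.inr h)
        · exact Or.inr (Or.inl h)
      exact hDZ g hg.1 hgB hg.2
    · exact Set.subset_inter hZA hZC
  have hBCZ : B ∩ C = ringCenter R := by
    apply Set.Subset.antisymm
    · intro g hg
      have hgA : g ∈ A := by
        refine scorza hBc hCc hAc ?_ hBmem.2 hCmem.2 hg
        intro x; rcases hcover x with h | h | h
        · exact Or.inr (Or.inr h)
        · exact Or.inl h
        · exact Or.inr (Or.inl h)
      exact hDZ g hgA hg.1 hg.2
    · exact Set.subset_inter hZB hZC
  -- set up the parts
  refine ⟨![A, B, C], ![ra, rb, rc], ?_, ?_, ?_, ?_, ?_, ?_, ?_, ?_⟩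
  · intro i; fin_cases i <;> assumption
  · intro i; fin_cases i <;> assumption
  · intro i; fin_cases i <;> assumption
  · intro i; fin_cases i <;> assumption
  · intro i j hij
    fin_cases i <;> fin_cases j <;> simp_all <;>
      first
        | exact hABZ
        | exact hACZ
        | exact hBCZ
        | (rw [Set.inter_comm]; first | exact hABZ | exact hACZ | exact hBCZ)
  · intro x
    rcases hcover x with h | h | h
    · exact ⟨0, h⟩
    · exact ⟨1, h⟩
    · exact ⟨2, h⟩
  · intro i
    fin_cases i
    · intro x hx hxZ y hy hyZ
      exact diff_central hAc hBc hCc hcover hABZ hACZ hrbB hrbZ x hx hxZ y hy hyZ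
    · intro x hx hxZ y hy hyZ
      refine diff_central hBc hAc hCc ?_ (Set.inter_comm A B ▸ hABZ) hBCZ hraA hraZ x hx hxZ y hy hyZ
      intro w; rcases hcover w with h | h | h
      · exact Or.inr (Or.inl h)
      · exact Or.inl h
      · exact Or.inr (Or.inr h)
    · intro x hx hxZ y hy hyZ
      refine diff_central hCc hAc hBc ?_ (Set.inter_comm A C ▸ hACZ)
        (Set.inter_comm B C ▸ hBCZ) hraA hraZ x hx hxZ y hy hyZ
      intro w; rcases hcover w with h | h | h
      · exact Or.inr (Or.inl h)
      · exact Or.inr (Or.inr h)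
      · exact Or.inl h
  · -- commuting noncentral elements lie in the same parts
    intro x y hxZ hyZ hcomm i hxi
    have hyCx : y ∈ ringCentralizer x := hcomm
    have hxCx : x ∈ ringCentralizer x := self_mem_rc x
    have hclassx := hclass x
    rcases hclassx with h | h | h | h
    · exact absurd (center_of_rc_eq_univ h) hxZ
    all_goals {
      rw [h] at hyCx hxCx
      fin_cases i <;>
        simp only [Matrix.cons_val_zero, Matrix.cons_val_one, Matrix.head_cons,
          Matrix.cons_val_two, Matrix.tail_cons] at hxi ⊢ <;>
        first
          | assumption
          | (exfalso
             apply hxZ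
             first
               | exact hABZ ▸ Set.mem_inter hxi hxCx
               | exact hACZ ▸ Set.mem_inter hxi hxCx
               | exact hBCZ ▸ Set.mem_inter hxi hxCx
               | exact hABZ ▸ Set.mem_inter hxCx hxi
               | exact hACZ ▸ Set.mem_inter hxCx hxi
               | exact hBCZ ▸ Set.mem_inter hxCx hxi)
    }
end Structure

end AuxLemmas

/-- for a finite 4-centralizer ring, the characteristic polynomial
of the adjacency matrix of the commuting graph is
`(X+1)^(3|Z(R)|-3) * (X - (|Z(R)|-1))^3`; in particular the graph is integral. -/
theorem stmt15 (R : Type*) [NonUnitalRing R] [Fintype R]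
    (h4 : {S : Set R | ∃ r : R, S = ringCentralizer r}.ncard = 4) :
    commCharpoly R ℤ =
      (X + 1) ^ (3 * (ringCenter R).ncard - 3) *
        (X - C (((ringCenter R).ncard : ℤ) - 1)) ^ 3 ∧
    ∀ μ : ℝ, (commCharpoly R ℝ).IsRoot μ → ∃ k : ℤ, μ = (k : ℝ) := by
  classical
  obtain ⟨P, v, hvP, hvZ, hZP, hPc, hPinter, hPcover, hPdiff, hsame⟩ := structure_of_four h4
  haveI : Fintype ↥(ringCenter R) := Fintype.ofFinite _
  haveI : Nonempty ↥(ringCenter R) := ⟨⟨0, zero_mem_center⟩⟩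
  set n := Fintype.card ↥(ringCenter R) with hndef
  have hn : (ringCenter R).ncard = n := by
    rw [← Nat.card_coe_set_eq, Nat.card_eq_fintype_card]
  -- non-central shifts
  have hadd_notZ : ∀ (i : Fin 3) (z : R), z ∈ ringCenter R → v i + z ∉ ringCenter R := by
    intro i z hz h
    apply hvZ i
    have := center_sub_mem h hz
    rwa [add_sub_cancel_right] at this
  have hmemP : ∀ (i : Fin 3) (z : R), z ∈ ringCenter R → v i + z ∈ P i := by
    intro i z hz
    have h0 : (0 : R) - z ∈ P i := hPc i _ (hZP i zero_mem_center) _ (hZP i hz)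
    have := hPc i _ (hvP i) _ h0
    rwa [zero_sub, sub_neg_eq_add] at this
  -- the vertex bijection
  let f : ↥(ringCenter R) × Fin 3 → {x : R // x ∉ ringCenter R} :=
    fun p => ⟨v p.2 + (p.1 : R), hadd_notZ p.2 p.1 p.1.2⟩
  have hinj : Function.Injective f := by
    rintro ⟨z, i⟩ ⟨w, j⟩ h
    have heq : v i + (z : R) = v j + (w : R) := congrArg Subtype.val h
    have hij : i = j := by
      by_contra hij
      have h1 : v i + (z : R) ∈ P i := hmemP i z z.2
      have h2 : v i + (z : R) ∈ P j := by rw [heq]; exact hmemP j w w.2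
      have hmem2 : v i + (z : R) ∈ P i ∩ P j := Set.mem_inter h1 h2
      rw [hPinter i j hij] at hmem2
      exact hadd_notZ i z z.2 hmem2
    subst hij
    have : (z : R) = w := add_left_cancel heq
    exact Prod.ext (Subtype.ext this) rfl
  have hsurj : Function.Surjective f := by
    rintro ⟨x, hx⟩
    obtain ⟨i, hxi⟩ := hPcover x
    have hzmem : x - v i ∈ ringCenter R := hPdiff i x hxi hx (v i) (hvP i) (hvZ i)
    refine ⟨(⟨x - v i, hzmem⟩, i), ?_⟩
    apply Subtype.ext
    show v i + (x - v i) = x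
    abel
  let e : ↥(ringCenter R) × Fin 3 ≃ {x : R // x ∉ ringCenter R} :=
    Equiv.ofBijective f ⟨hinj, hsurj⟩
  -- adjacency characterisation
  have hAdj : ∀ (z w : ↥(ringCenter R)) (i j : Fin 3),
      (commGraph R).Adj (f (z, i)) (f (w, j)) ↔ (i = j ∧ z ≠ w) := by
    intro z w i j
    constructor
    · rintro ⟨hne, hcomm⟩
      have hxZ := hadd_notZ i z z.2
      have hyZ := hadd_notZ j w w.2
      have hyPi : v j + (w : R) ∈ P i := hsame _ _ hxZ hyZ hcomm i (hmemP i z z.2)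
      have hij : i = j := by
        by_contra hij
        have hmem2 : v j + (w : R) ∈ P i ∩ P j := Set.mem_inter hyPi (hmemP j w w.2)
        rw [hPinter i j hij] at hmem2
        exact hyZ hmem2
      subst hij
      refine ⟨rfl, fun hzw => hne ?_⟩
      subst hzw; rfl
    · rintro ⟨rfl, hzw⟩
      constructor
      · intro h
        exact hzw (congrArg Prod.fst (hinj h))
      · show (v i + (z : R)) * (v i + (w : R)) = (v i + (w : R)) * (v i + (z : R))
        have hz : ∀ r : R, r * (z : R) = (z : R) * r := z.2
        have hw : ∀ r : R, r * (w : R) = (w : R) * r := w.2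
        rw [add_mul, add_mul, mul_add, mul_add, mul_add, mul_add,
          hz (v i), hw (v i), hw (z : R)]
        abel
  -- the adjacency matrix in block-diagonal form
  have hMat : ((commGraph R).adjMatrix ℤ).submatrix e e =
      Matrix.blockDiagonal (fun _ : Fin 3 =>
        Matrix.of (fun z w : ↥(ringCenter R) => if z = w then (0 : ℤ) else 1)) := by
    ext ⟨z, i⟩ ⟨w, j⟩
    rw [Matrix.submatrix_apply, Matrix.blockDiagonal_apply]
    have he1 : e (z, i) = f (z, i) := rfl
    have he2 : e (w, j) = f (w, j) := rfl
    rw [he1, he2, SimpleGraph.adjMatrix_apply]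
    by_cases hij : i = j
    · subst hij
      by_cases hzw : z = w
      · subst hzw
        rw [if_neg ((commGraph R).loopless.irrefl _), if_pos rfl]
        simp
      · rw [if_pos ((hAdj z w i i).mpr ⟨rfl, hzw⟩), if_pos rfl]
        simp [hzw]
    · rw [if_neg (fun h => hij ((hAdj z w i j).mp h).1), if_neg hij]
  -- compute the characteristic polynomial over ℤ
  have hone : 1 ≤ n := Fintype.card_pos
  have hcp : commCharpoly R ℤ =
      (X + 1) ^ (3 * (ringCenter R).ncard - 3) *
        (X - C (((ringCenter R).ncard : ℤ) - 1)) ^ 3 := by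
    have h1 : commCharpoly R ℤ = ((commGraph R).adjMatrix ℤ).charpoly := rfl
    have h2 : (((commGraph R).adjMatrix ℤ).submatrix e e).charpoly =
        ((commGraph R).adjMatrix ℤ).charpoly := by
      have := Matrix.charpoly_reindex (e := e.symm) ((commGraph R).adjMatrix ℤ)
      rwa [Matrix.reindex_apply, Equiv.symm_symm] at this
    rw [h1, ← h2, hMat, charpoly_blockDiagonal', charpoly_clique,
      Finset.prod_const, Finset.card_univ, Fintype.card_fin, mul_pow, ← pow_mul, hn]
    have hexp : (n - 1) * 3 = 3 * n - 3 := by omega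
    rw [hexp]
  refine ⟨hcp, ?_⟩
  -- integrality of the spectrum over ℝ
  intro μ hroot
  have hR : commCharpoly R ℝ = (commCharpoly R ℤ).map (Int.castRingHom ℝ) := by
    have hadjmap : (commGraph R).adjMatrix ℝ =
        ((commGraph R).adjMatrix ℤ).map (Int.castRingHom ℝ) := by
      ext a b
      simp [Matrix.map_apply, apply_ite (Int.cast : ℤ → ℝ)]
    show ((commGraph R).adjMatrix ℝ).charpoly = _
    rw [hadjmap, Matrix.charpoly_map]
    rfl
  rw [hR, hcp] at hroot
  simp only [Polynomial.map_mul, Polynomial.map_pow, Polynomial.map_add, Polynomial.map_sub,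
    Polynomial.map_X, Polynomial.map_one, Polynomial.map_C] at hroot
  have heval := hroot
  rw [Polynomial.IsRoot, Polynomial.eval_mul, Polynomial.eval_pow, Polynomial.eval_pow,
    Polynomial.eval_add, Polynomial.eval_sub, Polynomial.eval_X, Polynomial.eval_one,
    Polynomial.eval_C] at heval
  rcases mul_eq_zero.mp heval with h | h
  · have h1 : μ + 1 = 0 := (pow_eq_zero_iff'.mp h).1
    exact ⟨-1, by push_cast; linarith⟩
  · refine ⟨((ringCenter R).ncard : ℤ) - 1, ?_⟩
    have h1 := pow_eq_zero_iff (n := 3) (by norm_num) |>.mp h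
    rw [sub_eq_zero] at h1
    rw [h1]
    simp
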